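/- Every cyclic 3-gram of S_σ occurs exactly once; consequently S_σ contains exactly 2σ² distinct cyclic 3-grams. -/
import Mathlib


open List

/-- Block for symbol `a`: pairs (a,0)(a,1)⋯(a,σ-1) followed by a repeat of (a,σ-1). -/
def block (σ a : ℕ) : List ℕ :=
  ((List.range σ).flatMap fun b => [a, b]) ++ [a, σ - 1]

/-- The string S_σ: blocks for a = 0,…,σ-2 followed by the pair (σ-1,σ-1). -/
def Sstr (σ : ℕ) : List ℕ :=
  ((List.range (σ - 1)).flatMap fun a => block σ a) ++ [σ - 1, σ - 1]

/-- Rotation of `S` by offset `i`. -/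
def rot (S : List ℕ) (i : ℕ) : List ℕ := S.drop i ++ S.take i

/-- Cyclic k-gram of `S` starting at position `i` (indices mod `S.length`). -/
def cyc (S : List ℕ) (i k : ℕ) : List ℕ :=
  (List.range k).map fun j => S.getD ((i + j) % S.length) 0

/-- Number of cyclic occurrences of `u` in `S`. -/
def cOcc (S u : List ℕ) : ℕ :=
  ((List.range S.length).filter fun i => cyc S i u.length = u).length

/-- `u` occurs as a cyclic substring of `S`. -/
def cOccurs (S u : List ℕ) : Prop := 0 < cOcc S u

/-- Number of runs (maximal blocks of equal symbols) of a list. -/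
def runsCount (l : List ℕ) : ℕ := (l.destutter (· ≠ ·)).length

/-- Cyclic Burrows–Wheeler transform: sort all rotations lexicographically,
read the last column. -/
def cBWT (S : List ℕ) : List ℕ :=
  (((List.range S.length).map fun i => rot S i).insertionSort (· ≤ ·)).map
    fun ρ => ρ.getD (S.length - 1) 0

/-- Terminated string `t$`: symbols shifted by +1 and sentinel `0 = $` appended,
so the sentinel is strictly smaller than all alphabet symbols. -/
def term (t : List ℕ) : List ℕ := (t.map (· + 1)) ++ [0]

/-- BWT of the terminated string `t$`: last column of the sorted rotation matrix. -/
def bwt (t : List ℕ) : List ℕ :=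
  (((List.range (term t).length).map fun i => rot (term t) i).insertionSort (· ≤ ·)).map
    fun ρ => ρ.getD ((term t).length - 1) 0

/-- `x` is right-maximal in `w`: two distinct right extensions of `x` occur in `w`. -/
def RightMaximal (w x : List ℕ) : Prop :=
  ∃ a b : ℕ, a ≠ b ∧ (x ++ [a]) <:+: w ∧ (x ++ [b]) <:+: w

/-- The set of right-extensions of `w`. -/
def ExtSet (w : List ℕ) : Set (List ℕ) :=
  {y | ∃ x a, RightMaximal w x ∧ y = x ++ [a] ∧ y <:+: w}

/-- Super-maximal right-extensions: right-extensions that are not a proper suffix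
of another right-extension. -/
def SuperMax (w : List ℕ) : Set (List ℕ) :=
  {y ∈ ExtSet w | ∀ z ∈ ExtSet w, y <:+ z → y = z}

/-- χ: size of a smallest suffixient set = number of super-maximal right-extensions. -/
noncomputable def chi (w : List ℕ) : ℕ := (SuperMax w).ncard

/-- The regular cBWT block: each of 0,…,σ-1 twice in increasing order. -/
def patBlock (σ : ℕ) : List ℕ := (List.range σ).flatMap fun c => [c, c]

/-- The final irregular cBWT block: each of 0,…,σ-3 twice, then σ-2, σ-1, σ-2. -/
def patFinal (σ : ℕ) : List ℕ :=
  ((List.range (σ - 2)).flatMap fun c => [c, c]) ++ [σ - 2, σ - 1, σ - 2]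

/-- The canonical cBWT pattern: (σ-1) · (regular block)^m · final block. -/
def pattern (σ m : ℕ) : List ℕ :=
  [σ - 1] ++ (List.replicate m (patBlock σ)).flatten ++ patFinal σ

/-- `S` is 2-branching at order `k` over alphabet {0,…,σ-1}: every (k-1)-gram
occurs and its set of k-gram extensions is {u[0], (u[0]+1) mod σ}. -/
def TwoBranching (σ k : ℕ) (S : List ℕ) : Prop :=
  ∀ u : List ℕ, u.length = k - 1 → (∀ x ∈ u, x < σ) →
    cOccurs S u ∧ ∀ c, c < σ →
      (cOccurs S (u ++ [c]) ↔ c = u.headD 0 ∨ c = (u.headD 0 + 1) % σ)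

def dec (σ x y z : ℕ) : ℕ :=
  if x = σ - 1 then
    if z = σ - 1 then (if y = σ - 1 then 2*σ^2 - 3 else y*(2*σ+2) + 2*σ - 1)
    else if y = σ - 1 then 2*σ^2 - 2
    else if y = 0 then 2*σ^2 - 1
    else (y-1)*(2*σ+2) + 2*σ + 1
  else if z = x then x*(2*σ+2) + 2*y
  else if y = σ - 1 then x*(2*σ+2) + 2*σ
  else y*(2*σ+2) + 2*x + 1

def decL (σ : ℕ) (l : List ℕ) : ℕ :=
  match l with
  | [x, y, z] => dec σ x y z
  | _ => 0

section aux

lemma length_flatMap_range (f : ℕ → List ℕ) (L : ℕ) (h : ∀ a, (f a).length = L) :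
    ∀ k, ((List.range k).flatMap f).length = k * L := by
  intro k
  induction k with
  | zero => simp
  | succ k ih =>
    rw [List.range_succ, List.flatMap_append, List.length_append, ih]
    simp [h, Nat.succ_mul]

lemma getD_flatMap_range (f : ℕ → List ℕ) (L : ℕ) (h : ∀ a, (f a).length = L)
    {k a r : ℕ} (ha : a < k) (hr : r < L) :
    ((List.range k).flatMap f).getD (a * L + r) 0 = (f a).getD r 0 := by
  induction k with
  | zero => omega
  | succ k ih =>
    rw [List.range_succ, List.flatMap_append]
    rcases Nat.lt_or_ge a k with hk | hk
    · rw [List.getD_append]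
      · exact ih hk
      · rw [length_flatMap_range f L h]
        calc a * L + r < a * L + L := by omega
        _ = (a+1) * L := by ring
        _ ≤ k * L := Nat.mul_le_mul_right _ (by omega)
    · have hak : a = k := by omega
      subst hak
      rw [List.getD_append_right _ _ _ _ (by rw [length_flatMap_range f L h]; omega)]
      rw [length_flatMap_range f L h]
      simp [Nat.add_sub_cancel_left]

lemma block_pairs_len (a : ℕ) : ∀ b : ℕ, ([a, b] : List ℕ).length = 2 := fun _ => rfl

lemma length_block (σ a : ℕ) : (block σ a).length = 2 * σ + 2 := by
  rw [block, List.length_append, length_flatMap_range _ 2 (block_pairs_len a)]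
  simp [Nat.mul_comm]

lemma getD_block_even (σ a j : ℕ) (hj : j ≤ σ) : (block σ a).getD (2 * j) 0 = a := by
  rw [block]
  rcases Nat.lt_or_ge j σ with hj' | hj'
  · rw [List.getD_append _ _ _ _
      (by rw [length_flatMap_range _ 2 (block_pairs_len a)]; omega)]
    have h2 : 2 * j = j * 2 + 0 := by ring
    rw [h2, getD_flatMap_range _ 2 (block_pairs_len a) hj' (by omega)]
    rfl
  · have hje : j = σ := by omega
    subst hje
    rw [List.getD_append_right _ _ _ _
      (by rw [length_flatMap_range _ 2 (block_pairs_len a)]; omega)]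
    rw [length_flatMap_range _ 2 (block_pairs_len a)]
    have h2 : 2 * j - j * 2 = 0 := by omega
    rw [h2]
    rfl

lemma getD_block_odd (σ a j : ℕ) (hj : j ≤ σ) :
    (block σ a).getD (2 * j + 1) 0 = min j (σ - 1) := by
  rw [block]
  rcases Nat.lt_or_ge j σ with hj' | hj'
  · rw [List.getD_append _ _ _ _
      (by rw [length_flatMap_range _ 2 (block_pairs_len a)]; omega)]
    have h2 : 2 * j + 1 = j * 2 + 1 := by ring
    rw [h2, getD_flatMap_range _ 2 (block_pairs_len a) hj' (by omega)]
    simp; omega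
  · have hje : j = σ := by omega
    subst hje
    rw [List.getD_append_right _ _ _ _
      (by rw [length_flatMap_range _ 2 (block_pairs_len a)]; omega)]
    rw [length_flatMap_range _ 2 (block_pairs_len a)]
    have h2 : 2 * j + 1 - j * 2 = 1 := by omega
    rw [h2]
    show j - 1 = min j (j - 1)
    omega

lemma key_prod (σ : ℕ) (hσ : 2 ≤ σ) : (σ - 1) * (2 * σ + 2) + 2 = 2 * σ ^ 2 := by
  obtain ⟨t, rfl⟩ : ∃ t, σ = t + 2 := ⟨σ - 2, by omega⟩
  have h1 : t + 2 - 1 = t + 1 := by omega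
  rw [h1]; ring

lemma length_Sstr (σ : ℕ) (hσ : 2 ≤ σ) : (Sstr σ).length = 2 * σ ^ 2 := by
  rw [Sstr, List.length_append,
    length_flatMap_range _ (2 * σ + 2) (fun a => length_block σ a) (σ - 1)]
  simpa using key_prod σ hσ

lemma getD_Sstr (σ : ℕ) {a r : ℕ} (ha : a < σ - 1) (hr : r < 2 * σ + 2) :
    (Sstr σ).getD (a * (2 * σ + 2) + r) 0 = (block σ a).getD r 0 := by
  rw [Sstr]
  rw [List.getD_append]
  · exact getD_flatMap_range _ _ (fun a => length_block σ a) ha hr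
  · rw [length_flatMap_range _ (2 * σ + 2) (fun a => length_block σ a)]
    calc a * (2*σ+2) + r < a * (2*σ+2) + (2*σ+2) := by omega
    _ = (a+1) * (2*σ+2) := by ring
    _ ≤ (σ-1) * (2*σ+2) := Nat.mul_le_mul_right _ (by omega)

lemma getD_Sstr_last (σ : ℕ) (hσ : 2 ≤ σ) :
    (Sstr σ).getD (2 * σ ^ 2 - 2) 0 = σ - 1 ∧ (Sstr σ).getD (2 * σ ^ 2 - 1) 0 = σ - 1 := by
  have hk := key_prod σ hσ
  have hl : (((List.range (σ - 1)).flatMap fun a => block σ a)).length = (σ-1)*(2*σ+2) :=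
    length_flatMap_range _ (2 * σ + 2) (fun a => length_block σ a) (σ - 1)
  constructor
  · rw [Sstr, List.getD_append_right _ _ _ _ (by omega), hl]
    have h2 : 2 * σ ^ 2 - 2 - (σ-1)*(2*σ+2) = 0 := by omega
    rw [h2]
    rfl
  · rw [Sstr, List.getD_append_right _ _ _ _ (by omega), hl]
    have h2 : 2 * σ ^ 2 - 1 - (σ-1)*(2*σ+2) = 1 := by omega
    rw [h2]
    rfl

lemma cyc3 (S : List ℕ) (i : ℕ) : cyc S i 3 =
    [S.getD (i % S.length) 0, S.getD ((i+1) % S.length) 0, S.getD ((i+2) % S.length) 0] := by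
  simp [cyc, List.range_succ]

lemma decomp (σ i : ℕ) (hσ : 2 ≤ σ) (hi : i < 2 * σ ^ 2 - 2) :
    ∃ a j, a < σ - 1 ∧ j ≤ σ ∧
      (i = a * (2 * σ + 2) + 2 * j ∨ i = a * (2 * σ + 2) + 2 * j + 1) := by
  have hk := key_prod σ hσ
  have hq : 0 < 2 * σ + 2 := by omega
  refine ⟨i / (2 * σ + 2), (i % (2 * σ + 2)) / 2, ?_, ?_, ?_⟩
  · rw [Nat.div_lt_iff_lt_mul hq]
    generalize hP : (σ - 1) * (2 * σ + 2) = P at hk ⊢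
    omega
  · have h1 : i % (2 * σ + 2) < 2 * σ + 2 := Nat.mod_lt _ hq
    omega
  · have h1 := Nat.div_add_mod' i (2 * σ + 2)
    generalize hr : i % (2 * σ + 2) = r at h1 ⊢
    generalize hA : i / (2 * σ + 2) * (2 * σ + 2) = A at h1 ⊢
    omega

end aux

lemma dec_correct (σ : ℕ) (hσ : 2 ≤ σ) (i : ℕ) (hi : i < 2 * σ ^ 2) :
    decL σ (cyc (Sstr σ) i 3) = i := by
  have hN := length_Sstr σ hσ
  have hk := key_prod σ hσ
  obtain ⟨hL2, hL1⟩ := getD_Sstr_last σ hσ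
  have hσ1 : 1 ≤ σ - 1 := by omega
  have hcyc := cyc3 (Sstr σ) i
  rw [hN] at hcyc
  rcases Nat.lt_or_ge i (2 * σ ^ 2 - 2) with hi2 | hi2
  · have hmod0 : i % (2 * σ ^ 2) = i := Nat.mod_eq_of_lt (by omega)
    have hmod1 : (i + 1) % (2 * σ ^ 2) = i + 1 := Nat.mod_eq_of_lt (by omega)
    have hmod2 : (i + 2) % (2 * σ ^ 2) = i + 2 := Nat.mod_eq_of_lt (by omega)
    rw [hmod0, hmod1, hmod2] at hcyc
    obtain ⟨a, j, ha, hj, hcase⟩ := decomp σ i hσ hi2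
    have hub : a * (2 * σ + 2) + (2 * σ + 2) ≤ 2 * σ ^ 2 - 2 := by
      calc a * (2*σ+2) + (2*σ+2) = (a+1) * (2*σ+2) := by ring
      _ ≤ (σ-1) * (2*σ+2) := Nat.mul_le_mul_right _ (by omega)
      _ = 2*σ^2 - 2 := Nat.eq_sub_of_add_eq hk
    rcases hcase with rfl | rfl
    · -- even position
      rcases Nat.lt_or_ge j σ with hjσ | hjσ
      · -- j ≤ σ - 1 : triple (a, j, a)
        have e0 : (Sstr σ).getD (a * (2*σ+2) + 2*j) 0 = a := by
          rw [getD_Sstr σ ha (by omega), getD_block_even σ a j hj]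
        have e1 : (Sstr σ).getD (a * (2*σ+2) + 2*j + 1) 0 = j := by
          rw [add_assoc, getD_Sstr σ ha (by omega), getD_block_odd σ a j hj]
          omega
        have e2 : (Sstr σ).getD (a * (2*σ+2) + 2*j + 2) 0 = a := by
          have h' : a * (2*σ+2) + 2*j + 2 = a * (2*σ+2) + 2*(j+1) := by ring
          rw [h', getD_Sstr σ ha (by omega), getD_block_even σ a (j+1) (by omega)]
        rw [hcyc, e0, e1, e2]
        show dec σ a j a = _
        rw [dec, if_neg (by omega), if_pos rfl]
      · -- j = σ : triple (a, σ-1, a+1)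
        have hje : j = σ := by omega
        have e0 : (Sstr σ).getD (a * (2*σ+2) + 2*j) 0 = a := by
          rw [getD_Sstr σ ha (by omega), getD_block_even σ a j hj]
        have e1 : (Sstr σ).getD (a * (2*σ+2) + 2*j + 1) 0 = σ - 1 := by
          rw [add_assoc, getD_Sstr σ ha (by omega), getD_block_odd σ a j hj]
          omega
        have e2 : (Sstr σ).getD (a * (2*σ+2) + 2*j + 2) 0 = a + 1 := by
          rcases Nat.lt_or_ge (a+1) (σ-1) with haσ | haσ
          · have h' : a * (2*σ+2) + 2*j + 2 = (a+1) * (2*σ+2) + 2*0 := by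
              rw [hje]; ring
            rw [h', getD_Sstr σ haσ (by omega), getD_block_even σ (a+1) 0 (by omega)]
          · have haσ' : a + 1 = σ - 1 := by omega
            have h' : a * (2*σ+2) + 2*j + 2 = 2 * σ ^ 2 - 2 := by
              calc a * (2*σ+2) + 2*j + 2 = (a+1) * (2*σ+2) := by rw [hje]; ring
              _ = (σ-1) * (2*σ+2) := by rw [haσ']
              _ = 2*σ^2 - 2 := Nat.eq_sub_of_add_eq hk
            rw [h', hL2]
            omega
        rw [hcyc, e0, e1, e2]
        show dec σ a (σ-1) (a+1) = _
        rw [dec, if_neg (by omega), if_neg (by omega), if_pos rfl, hje]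
    · -- odd position
      rcases Nat.lt_or_ge j (σ - 1) with hj1 | hj1
      · -- j < σ-1 : triple (j, a, j+1)
        have e0 : (Sstr σ).getD (a * (2*σ+2) + 2*j + 1) 0 = j := by
          rw [add_assoc, getD_Sstr σ ha (by omega), getD_block_odd σ a j hj]
          omega
        have e1 : (Sstr σ).getD (a * (2*σ+2) + 2*j + 1 + 1) 0 = a := by
          have h' : a * (2*σ+2) + 2*j + 1 + 1 = a * (2*σ+2) + 2*(j+1) := by ring
          rw [h', getD_Sstr σ ha (by omega), getD_block_even σ a (j+1) (by omega)]
        have e2 : (Sstr σ).getD (a * (2*σ+2) + 2*j + 1 + 2) 0 = j + 1 := by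
          have h' : a * (2*σ+2) + 2*j + 1 + 2 = a * (2*σ+2) + (2*(j+1) + 1) := by ring
          rw [h', getD_Sstr σ ha (by omega), getD_block_odd σ a (j+1) (by omega)]
          omega
        rw [hcyc, e0, e1, e2]
        show dec σ j a (j+1) = _
        rw [dec, if_neg (by omega), if_neg (by omega), if_neg (by omega)]
      · rcases Nat.lt_or_ge j σ with hjσ | hjσ
        · -- j = σ-1 : triple (σ-1, a, σ-1)
          have hje : j = σ - 1 := by omega
          have e0 : (Sstr σ).getD (a * (2*σ+2) + 2*j + 1) 0 = σ - 1 := by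
            rw [add_assoc, getD_Sstr σ ha (by omega), getD_block_odd σ a j hj]
            omega
          have e1 : (Sstr σ).getD (a * (2*σ+2) + 2*j + 1 + 1) 0 = a := by
            have h' : a * (2*σ+2) + 2*j + 1 + 1 = a * (2*σ+2) + 2*σ := by
              generalize a * (2*σ+2) = A
              omega
            rw [h', getD_Sstr σ ha (by omega), getD_block_even σ a σ le_rfl]
          have e2 : (Sstr σ).getD (a * (2*σ+2) + 2*j + 1 + 2) 0 = σ - 1 := by
            have h' : a * (2*σ+2) + 2*j + 1 + 2 = a * (2*σ+2) + (2*σ + 1) := by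
              generalize a * (2*σ+2) = A
              omega
            rw [h', getD_Sstr σ ha (by omega), getD_block_odd σ a σ le_rfl]
            omega
          rw [hcyc, e0, e1, e2]
          show dec σ (σ-1) a (σ-1) = _
          rw [dec, if_pos rfl, if_pos rfl, if_neg (by omega)]
          generalize a * (2*σ+2) = A
          omega
        · -- j = σ : i = a q + 2σ + 1
          have hje : j = σ := by omega
          have e0 : (Sstr σ).getD (a * (2*σ+2) + 2*j + 1) 0 = σ - 1 := by
            rw [add_assoc, getD_Sstr σ ha (by omega), getD_block_odd σ a j hj]
            omega
          rcases Nat.lt_or_ge (a+1) (σ-1) with haσ | haσ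
          · -- triple (σ-1, a+1, 0)
            have e1 : (Sstr σ).getD (a * (2*σ+2) + 2*j + 1 + 1) 0 = a + 1 := by
              have h' : a * (2*σ+2) + 2*j + 1 + 1 = (a+1) * (2*σ+2) + 2*0 := by
                rw [hje]; ring
              rw [h', getD_Sstr σ haσ (by omega), getD_block_even σ (a+1) 0 (by omega)]
            have e2 : (Sstr σ).getD (a * (2*σ+2) + 2*j + 1 + 2) 0 = 0 := by
              have h' : a * (2*σ+2) + 2*j + 1 + 2 = (a+1) * (2*σ+2) + (2*0 + 1) := by
                rw [hje]; ring
              rw [h', getD_Sstr σ haσ (by omega), getD_block_odd σ (a+1) 0 (by omega)]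
              omega
            rw [hcyc, e0, e1, e2]
            show dec σ (σ-1) (a+1) 0 = _
            rw [dec, if_pos rfl, if_neg (by omega), if_neg (by omega), if_neg (by omega)]
            simp only [Nat.add_sub_cancel]
            rw [hje]
          · -- a+1 = σ-1 : triple (σ-1, σ-1, σ-1)
            have haσ' : a + 1 = σ - 1 := by omega
            have hP : a * (2*σ+2) + (2*σ+2) = 2*σ^2 - 2 := by
              calc a * (2*σ+2) + (2*σ+2) = (a+1) * (2*σ+2) := by ring
              _ = (σ-1) * (2*σ+2) := by rw [haσ']
              _ = 2*σ^2 - 2 := Nat.eq_sub_of_add_eq hk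
            have e1 : (Sstr σ).getD (a * (2*σ+2) + 2*j + 1 + 1) 0 = σ - 1 := by
              have h' : a * (2*σ+2) + 2*j + 1 + 1 = 2*σ^2 - 2 := by
                generalize hA : a * (2*σ+2) = A at hP ⊢
                omega
              rw [h', hL2]
            have e2 : (Sstr σ).getD (a * (2*σ+2) + 2*j + 1 + 2) 0 = σ - 1 := by
              have h' : a * (2*σ+2) + 2*j + 1 + 2 = 2*σ^2 - 1 := by
                generalize hA : a * (2*σ+2) = A at hP ⊢
                omega
              rw [h', hL1]
            rw [hcyc, e0, e1, e2]
            show dec σ (σ-1) (σ-1) (σ-1) = _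
            rw [dec, if_pos rfl, if_pos rfl, if_pos rfl]
            generalize hA : a * (2*σ+2) = A at hP ⊢
            omega
  · -- i = 2σ²-2 or 2σ²-1
    have hS0 : (Sstr σ).getD 0 0 = 0 := by
      have h0 : (Sstr σ).getD (0 * (2*σ+2) + 2*0) 0 = 0 := by
        rw [getD_Sstr σ (by omega) (by omega), getD_block_even σ 0 0 (by omega)]
      simpa using h0
    have hS1 : (Sstr σ).getD 1 0 = 0 := by
      have h0 : (Sstr σ).getD (0 * (2*σ+2) + (2*0 + 1)) 0 = 0 := by
        rw [getD_Sstr σ (by omega) (by omega), getD_block_odd σ 0 0 (by omega)]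
        omega
      simpa using h0
    rcases Nat.lt_or_ge i (2*σ^2 - 1) with hi3 | hi3
    · -- i = 2σ²-2 : triple (σ-1, σ-1, 0)
      have hie : i = 2*σ^2 - 2 := by omega
      subst hie
      have hmod0 : (2*σ^2 - 2) % (2*σ^2) = 2*σ^2 - 2 := Nat.mod_eq_of_lt (by omega)
      have hmod1 : (2*σ^2 - 2 + 1) % (2*σ^2) = 2*σ^2 - 1 := by
        rw [Nat.mod_eq_of_lt (by omega)]; omega
      have hmod2 : (2*σ^2 - 2 + 2) % (2*σ^2) = 0 := by
        have h' : 2*σ^2 - 2 + 2 = 2*σ^2 := by omega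
        rw [h', Nat.mod_self]
      rw [hmod0, hmod1, hmod2] at hcyc
      rw [hcyc, hL2, hL1, hS0]
      show dec σ (σ-1) (σ-1) 0 = _
      rw [dec, if_pos rfl, if_neg (by omega), if_pos rfl]
    · -- i = 2σ²-1 : triple (σ-1, 0, 0)
      have hie : i = 2*σ^2 - 1 := by omega
      subst hie
      have hmod0 : (2*σ^2 - 1) % (2*σ^2) = 2*σ^2 - 1 := Nat.mod_eq_of_lt (by omega)
      have hmod1 : (2*σ^2 - 1 + 1) % (2*σ^2) = 0 := by
        have h' : 2*σ^2 - 1 + 1 = 2*σ^2 := by omega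
        rw [h', Nat.mod_self]
      have hmod2 : (2*σ^2 - 1 + 2) % (2*σ^2) = 1 := by
        have h' : 2*σ^2 - 1 + 2 = 2*σ^2 + 1 := by omega
        rw [h', Nat.add_mod_left, Nat.mod_eq_of_lt (by omega)]
      rw [hmod0, hmod1, hmod2] at hcyc
      rw [hcyc, hL1, hS0, hS1]
      show dec σ (σ-1) 0 0 = _
      rw [dec, if_pos rfl, if_neg (by omega), if_neg (by omega), if_pos rfl]

lemma range_filter_eq (N i : ℕ) (h : i < N) :
    (List.range N).filter (fun j => decide (j = i)) = [i] := by
  induction N with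
  | zero => omega
  | succ N ih =>
    rw [List.range_succ, List.filter_append]
    rcases Nat.lt_or_ge i N with h' | h'
    · rw [ih h']
      have : (List.filter (fun j => decide (j = i)) [N]) = [] := by
        simp; omega
      rw [this, List.append_nil]
    · have hiN : i = N := by omega
      subst hiN
      have h1 : (List.range i).filter (fun j => decide (j = i)) = [] := by
        rw [List.filter_eq_nil_iff]
        intro a ha
        simp only [List.mem_range] at ha
        simp; omega
      rw [h1]
      simp


/-- every cyclic 3-gram of S_σ occurs exactly once; consequently
S_σ contains exactly 2σ² distinct cyclic 3-grams. -/
theorem stmt5 (σ : ℕ) (hσ : 2 ≤ σ) :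
    (∀ i, i < (Sstr σ).length → cOcc (Sstr σ) (cyc (Sstr σ) i 3) = 1) ∧
    ((Finset.range (Sstr σ).length).image (fun i => cyc (Sstr σ) i 3)).card
      = 2 * σ ^ 2 := by
  have hN := length_Sstr σ hσ
  constructor
  · intro i hi
    rw [hN] at hi
    have h3 : (cyc (Sstr σ) i 3).length = 3 := by simp [cyc]
    rw [cOcc, h3]
    have hfc : ((List.range (Sstr σ).length).filter fun j => decide (cyc (Sstr σ) j 3 = cyc (Sstr σ) i 3))
        = (List.range (Sstr σ).length).filter fun j => decide (j = i) := by
      apply List.filter_congr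
      intro j hj
      simp only [List.mem_range, hN] at hj
      simp only [decide_eq_decide]
      constructor
      · intro h
        have h2 := congrArg (decL σ) h
        rwa [dec_correct σ hσ j hj, dec_correct σ hσ i hi] at h2
      · rintro rfl; rfl
    rw [hfc, hN, range_filter_eq _ _ hi]
    rfl
  · have hinj : Set.InjOn (fun i => cyc (Sstr σ) i 3) ↑(Finset.range (Sstr σ).length) := by
      intro x hx y hy hxy
      simp only [Finset.coe_range, Set.mem_Iio, hN] at hx hy
      have h2 := congrArg (decL σ) hxy
      rwa [dec_correct σ hσ x hx, dec_correct σ hσ y hy] at h2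
    rw [Finset.card_image_of_injOn hinj, Finset.card_range, hN]
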